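/- arXiv:1802.09704 — 6 statements merged into one kernel-verified Lean document; each statement's English description precedes it below -/
import Mathlib

section
/- Let χ be a Dirichlet character modulo q, let K ≥ 1 and H be integers, and let α, β, s ∈ ℂ with Re(s−α) > 1 and Re(s−β) > 1. Then Σ_{1 ≤ u,v ≤ Kq} χ(u)χ(v) e(uvH/(Kq)) · ( F(s−α, u/(Kq)) F(s−β, v/(Kq)) − F(s−α, −u/(Kq)) F(s−β, −v/(Kq)) ) = 0, and likewise Σ_{1 ≤ u,v ≤ Kq} χ(u)χ(v) e(uvH/(Kq)) · ( F(s−α, u/(Kq)) F(s−β, −v/(Kq)) − F(s−α, −u/(Kq)) F(s−β, v/(Kq)) ) = 0. -/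
open Complex Filter Finset

noncomputable section

/-- `e(x) = e^{2πix}`. -/
def e (x : ℝ) : ℂ := Complex.exp (2 * Real.pi * I * x)

/-- `F(s,x) = ∑_{n ≥ 1} e(nx) n^{-s}` (as a series). -/
def Fser (s : ℂ) (x : ℝ) : ℂ := ∑' n : ℕ+, e ((n : ℝ) * x) * (n : ℂ) ^ (-s)

lemma e_add_int (x : ℝ) (n : ℤ) : e (x + n) = e x := by
  unfold e
  rw [show ((x + n : ℝ) : ℂ) = (x : ℂ) + (n : ℂ) by push_cast; ring]
  rw [mul_add, Complex.exp_add,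
    show (2 * (Real.pi : ℂ) * I * (n : ℂ)) = (n : ℤ) * (2 * (Real.pi : ℂ) * I) by push_cast; ring,
    Complex.exp_int_mul_two_pi_mul_I, mul_one]

lemma Fser_add_int (t : ℂ) (y : ℝ) (n : ℤ) : Fser t (y + n) = Fser t y := by
  unfold Fser
  refine tsum_congr fun m => ?_
  congr 1
  have h : (m : ℝ) * (y + n) = (m : ℝ) * y + (((m : ℤ) * n : ℤ) : ℝ) := by push_cast; ring
  rw [h, e_add_int]

theorem symmetrization_identities_key (N q : ℕ) (hN : 0 < N) (hq : q ∣ N)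
    (χ : DirichletCharacter ℂ q) (H : ℤ) (A B : ℝ → ℂ)
    (hA : ∀ (y : ℝ) (n : ℤ), A (y + n) = A y) (hB : ∀ (y : ℝ) (n : ℤ), B (y + n) = B y) :
    ∑ u ∈ Finset.Icc 1 N, ∑ v ∈ Finset.Icc 1 N,
      χ (u : ZMod q) * χ (v : ZMod q) * e ((u * v : ℕ) * (H : ℝ) / N) *
        (A ((u : ℝ) / N) * B ((v : ℝ) / N) - A (-((u : ℝ) / N)) * B (-((v : ℝ) / N))) = 0 := by
  classical
  rw [← Finset.sum_product']
  set f : ℕ × ℕ → ℂ := fun p =>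
    χ (p.1 : ZMod q) * χ (p.2 : ZMod q) * e ((p.1 * p.2 : ℕ) * (H : ℝ) / N) *
      (A ((p.1 : ℝ) / N) * B ((p.2 : ℝ) / N) - A (-((p.1 : ℝ) / N)) * B (-((p.2 : ℝ) / N))) with hf
  set σ : ℕ → ℕ := fun u => if u = N then N else N - u with hσdef
  -- basic facts about σ
  have hσ_sum : ∀ u ∈ Finset.Icc 1 N, ∃ k : ℕ, σ u + u = k * N ∧ σ u ∈ Finset.Icc 1 N := by
    intro u hu
    simp only [Finset.mem_Icc] at hu ⊢
    by_cases h : u = N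
    · exact ⟨2, by simp [hσdef, h]; omega⟩
    · exact ⟨1, by simp [hσdef, h]; omega⟩
  have hσ_inv : ∀ u ∈ Finset.Icc 1 N, σ (σ u) = u := by
    intro u hu
    simp only [Finset.mem_Icc] at hu
    by_cases h : u = N
    · simp [hσdef, h]
    · have h1 : N - u ≠ N := by omega
      simp [hσdef, h, h1]; omega
  -- character relation
  have hχ : ∀ u ∈ Finset.Icc 1 N, χ ((σ u : ℕ) : ZMod q) = χ (-1) * χ ((u : ℕ) : ZMod q) := by
    intro u hu
    obtain ⟨k, hk, -⟩ := hσ_sum u hu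
    have h0 : (((σ u + u : ℕ)) : ZMod q) = 0 := by
      rw [hk]
      have : ((k * N : ℕ) : ZMod q) = (k : ZMod q) * ((N : ℕ) : ZMod q) := by push_cast; ring
      rw [this, (ZMod.natCast_eq_zero_iff N q).2 hq, mul_zero]
    have h1 : ((σ u : ℕ) : ZMod q) = -((u : ℕ) : ZMod q) := by
      push_cast at h0
      linear_combination h0
    rw [h1, show -((u : ℕ) : ZMod q) = (-1) * ((u : ℕ) : ZMod q) by ring, map_mul]
  have hχ2 : χ (-1) * χ (-1) = 1 := by
    rw [← map_mul]
    norm_num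
  -- A and B relations
  have hA' : ∀ u ∈ Finset.Icc 1 N, A ((σ u : ℝ) / N) = A (-((u : ℝ) / N)) := by
    intro u hu
    obtain ⟨k, hk, -⟩ := hσ_sum u hu
    have hNR : (N : ℝ) ≠ 0 := Nat.cast_ne_zero.2 hN.ne'
    have : ((σ u : ℝ)) / N = -((u : ℝ) / N) + ((k : ℤ) : ℝ) := by
      have : ((σ u : ℕ) : ℝ) + u = k * N := by exact_mod_cast congrArg (Nat.cast : ℕ → ℝ) hk
      field_simp
      push_cast
      linarith
    rw [this, hA]
  have hB' : ∀ u ∈ Finset.Icc 1 N, B ((σ u : ℝ) / N) = B (-((u : ℝ) / N)) := by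
    intro u hu
    obtain ⟨k, hk, -⟩ := hσ_sum u hu
    have hNR : (N : ℝ) ≠ 0 := Nat.cast_ne_zero.2 hN.ne'
    have : ((σ u : ℝ)) / N = -((u : ℝ) / N) + ((k : ℤ) : ℝ) := by
      have : ((σ u : ℕ) : ℝ) + u = k * N := by exact_mod_cast congrArg (Nat.cast : ℕ → ℝ) hk
      field_simp
      push_cast
      linarith
    rw [this, hB]
  -- e relation
  have he : ∀ u ∈ Finset.Icc 1 N, ∀ v ∈ Finset.Icc 1 N,
      e ((σ u * σ v : ℕ) * (H : ℝ) / N) = e ((u * v : ℕ) * (H : ℝ) / N) := by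
    intro u hu v hv
    obtain ⟨k₁, hk₁, -⟩ := hσ_sum u hu
    obtain ⟨k₂, hk₂, -⟩ := hσ_sum v hv
    have hNR : (N : ℝ) ≠ 0 := Nat.cast_ne_zero.2 hN.ne'
    have hz : ∃ c : ℤ, (σ u * σ v : ℤ) = (u * v : ℤ) + c * N := by
      refine ⟨(k₁ : ℤ) * k₂ * N - k₁ * v - k₂ * u, ?_⟩
      have h1 : (σ u : ℤ) = k₁ * N - u := by omega
      have h2 : (σ v : ℤ) = k₂ * N - v := by omega
      rw [h1, h2]; ring
    obtain ⟨c, hc⟩ := hz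
    have : ((σ u * σ v : ℕ) : ℝ) * (H : ℝ) / N = ((u * v : ℕ) : ℝ) * (H : ℝ) / N + ((c * H : ℤ) : ℝ) := by
      have hcr : ((σ u : ℝ)) * (σ v) = (u : ℝ) * v + (c : ℝ) * N := by exact_mod_cast congrArg (Int.cast : ℤ → ℝ) hc
      field_simp
      push_cast
      linear_combination (H : ℝ) * hcr
    rw [this, e_add_int]
  -- the involution argument
  refine Finset.sum_involution (fun p _ => (σ p.1, σ p.2)) ?_ ?_ ?_ ?_
  · intro p hp
    simp only [Finset.mem_product] at hp
    have h1 := hχ p.1 hp.1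
    have h2 := hχ p.2 hp.2
    have h3 := he p.1 hp.1 p.2 hp.2
    have h4 := hA' p.1 hp.1
    have h5 := hB' p.2 hp.2
    have h4' : A (-((σ p.1 : ℝ) / N)) = A ((p.1 : ℝ) / N) := by
      have h := hA' (σ p.1) ((hσ_sum p.1 hp.1).choose_spec.2)
      rw [hσ_inv p.1 hp.1] at h
      exact h.symm
    have h5' : B (-((σ p.2 : ℝ) / N)) = B ((p.2 : ℝ) / N) := by
      have h := hB' (σ p.2) ((hσ_sum p.2 hp.2).choose_spec.2)
      rw [hσ_inv p.2 hp.2] at h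
      exact h.symm
    simp only [hf]
    rw [h1, h2, h3, h4, h5, h4', h5']
    linear_combination (χ (p.1 : ZMod q) * χ (p.2 : ZMod q) * e (((p.1 * p.2 : ℕ) : ℝ) * (H : ℝ) / N) *
      (A (-((p.1 : ℝ) / N)) * B (-((p.2 : ℝ) / N)) - A ((p.1 : ℝ) / N) * B ((p.2 : ℝ) / N))) * hχ2
  · intro p hp hf0 heq
    simp only [Finset.mem_product] at hp
    have h1 : σ p.1 = p.1 := congrArg Prod.fst heq
    have h2 : σ p.2 = p.2 := congrArg Prod.snd heq
    have h4 := hA' p.1 hp.1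
    have h5 := hB' p.2 hp.2
    rw [h1] at h4
    rw [h2] at h5
    apply hf0
    show χ (p.1 : ZMod q) * χ (p.2 : ZMod q) * e ((p.1 * p.2 : ℕ) * (H : ℝ) / N) *
      (A ((p.1 : ℝ) / N) * B ((p.2 : ℝ) / N) - A (-((p.1 : ℝ) / N)) * B (-((p.2 : ℝ) / N))) = 0
    rw [h4, h5]
    ring
  · intro p hp
    simp only [Finset.mem_product] at hp ⊢
    exact ⟨(hσ_sum p.1 hp.1).choose_spec.2, (hσ_sum p.2 hp.2).choose_spec.2⟩
  · intro p hp
    simp only [Finset.mem_product] at hp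
    simp [hσ_inv p.1 hp.1, hσ_inv p.2 hp.2]


/-- The two symmetrization identities used in the proof of Lemma 2. -/
theorem symmetrization_identities (q : ℕ) (χ : DirichletCharacter ℂ q) (K : ℕ) (hK : 1 ≤ K)
    (H : ℤ) (α β s : ℂ) (hα : 1 < (s - α).re) (hβ : 1 < (s - β).re) :
    (∑ u ∈ Finset.Icc 1 (K * q), ∑ v ∈ Finset.Icc 1 (K * q),
      χ (u : ZMod q) * χ (v : ZMod q) * e ((u * v : ℕ) * (H : ℝ) / (K * q)) *
        (Fser (s - α) ((u : ℝ) / (K * q)) * Fser (s - β) ((v : ℝ) / (K * q)) -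
          Fser (s - α) (-((u : ℝ) / (K * q))) * Fser (s - β) (-((v : ℝ) / (K * q)))) = 0) ∧
    (∑ u ∈ Finset.Icc 1 (K * q), ∑ v ∈ Finset.Icc 1 (K * q),
      χ (u : ZMod q) * χ (v : ZMod q) * e ((u * v : ℕ) * (H : ℝ) / (K * q)) *
        (Fser (s - α) ((u : ℝ) / (K * q)) * Fser (s - β) (-((v : ℝ) / (K * q))) -
          Fser (s - α) (-((u : ℝ) / (K * q))) * Fser (s - β) ((v : ℝ) / (K * q))) = 0) := by
  rcases Nat.eq_zero_or_pos q with rfl | hq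
  · simp
  have hN : 0 < K * q := Nat.mul_pos hK hq
  have hdvd : q ∣ K * q := dvd_mul_left q K
  have hKq : ((K * q : ℕ) : ℝ) = (K : ℝ) * q := by push_cast; ring
  constructor
  · have h1 := symmetrization_identities_key (K * q) q hN hdvd χ H
      (fun x => Fser (s - α) x) (fun x => Fser (s - β) x)
      (fun y n => Fser_add_int _ y n) (fun y n => Fser_add_int _ y n)
    simpa only [hKq] using h1
  · have h2 := symmetrization_identities_key (K * q) q hN hdvd χ H
      (fun x => Fser (s - α) x) (fun x => Fser (s - β) (-x))
      (fun y n => Fser_add_int _ y n)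
      (fun y n => by
        show Fser (s - β) (-(y + (n : ℝ))) = Fser (s - β) (-y)
        rw [show -(y + (n : ℝ)) = -y + ((-n : ℤ) : ℝ) by push_cast; ring, Fser_add_int])
    simpa only [hKq, neg_neg] using h2
end
end

section
/- Let χ be a primitive Dirichlet character modulo q, let K ≥ 1 and H be integers with any two of q, H, K coprime, and let H̄ denote the integer with H·H̄ ≡ 1 (mod Kq) and 0 < H̄ ≤ Kq. Let α ∈ ℂ and s ∈ ℂ with Re(s) > 1 + max(0, Re(α)). Then Σ_{1 ≤ u,v ≤ Kq} χ(u)χ(v) e(uvH/(Kq)) F(s−α, u/(Kq)) F(s, v/(Kq)) = χ(H̄) τ(χ) K · Σ_{j=0}^{q−1} Σ_{m ≥ 1} Σ_{n ≥ 1} m^{−(s−α)} n^{−s} e(m(−n+Kj)H̄/(Kq)) χ̄(j) χ(−n+Kj). -/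
/-!
Expanding both Dirichlet series and interchanging the absolutely convergent sums reduces the
identity, for each pair of frequencies `m, n`, to a finite sum over `u, v` modulo `Kq`. There the
sum over `v` is `S(t) = ∑_v χ(v) e(vt/(Kq))` with `t = Hu + n`: translating `v` by `q` multiplies
`S(t)` by `e(t/K)`, so `S(t) = 0` unless `K ∣ t`, while `S(Kj) = K χ̄(j) τ(χ)` because `χ` is
primitive. Substituting `u = H̄(Kj - n)` then leaves the sum over `j`.
-/

open Complex Filter Finset

noncomputable section

/-- The Gauss sum `τ(χ) = ∑_{a mod q} χ(a) e(a/q)`. -/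
def gaussTau (q : ℕ) (χ : DirichletCharacter ℂ q) : ℂ :=
  ∑ a ∈ Finset.range q, χ (a : ZMod q) * e ((a : ℝ) / q)

lemma e_add (x y : ℝ) : e (x + y) = e x * e y := by
  simp only [e, ← Complex.exp_add]; push_cast; ring_nf

lemma norm_e (x : ℝ) : ‖e x‖ = 1 := by
  rw [e, Complex.norm_exp]; simp

lemma e_intCast_div {N : ℕ} [NeZero N] (j : ℤ) :
    e ((j : ℝ) / N) = ZMod.stdAddChar (j : ZMod N) := by
  rw [ZMod.stdAddChar_coe, e]; push_cast; ring_nf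

lemma ZMod.sum_range_natCast {M : Type*} [AddCommMonoid M] {N : ℕ} [NeZero N] (f : ZMod N → M) :
    ∑ i ∈ range N, f i = ∑ x, f x :=
  Finset.sum_nbij' (fun i => (i : ZMod N)) ZMod.val (by simp) (fun x _ => mem_range.2 x.val_lt)
    (fun i hi => ZMod.val_cast_of_lt (mem_range.1 hi)) (fun x _ => ZMod.natCast_zmod_val x)
    (fun _ _ => rfl)

lemma ZMod.sum_Icc_natCast {M : Type*} [AddCommMonoid M] {N : ℕ} [NeZero N] (f : ZMod N → M) :
    ∑ i ∈ Icc 1 N, f i = ∑ x, f x := by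
  rw [← Finset.Ico_add_one_right_eq_Icc, sum_Ico_eq_sum_range, Nat.add_sub_cancel]
  push_cast
  rw [ZMod.sum_range_natCast (fun x => f (1 + x))]
  exact Equiv.sum_comp (Equiv.addLeft 1) f

lemma gaussTau_eq_gaussSum {q : ℕ} [NeZero q] (χ : DirichletCharacter ℂ q) :
    gaussTau q χ = gaussSum χ ZMod.stdAddChar := by
  rw [gaussSum, ← ZMod.sum_range_natCast]
  exact sum_congr rfl fun i _ => by
    have h := e_intCast_div (N := q) i
    push_cast at h
    rw [h]

section CastHom

variable {q K : ℕ} [NeZero q] [NeZero K]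

local notation "ρ" => ZMod.castHom (dvd_mul_left q K) (ZMod q)

local notation "ψ" => ZMod.stdAddChar

lemma ZMod.sum_comp_castHom {M : Type*} [AddCommMonoid M] (G : ZMod q → M) :
    ∑ v : ZMod (K * q), G (ρ v) = K • ∑ a, G a := by
  classical
  have hsurj : Function.Surjective ρ := ZMod.ringHom_surjective _
  have hfiber : ∀ a, #{v | ρ v = a} = K := by
    have hconst : ∀ a, #{v | ρ v = a} = #{v | ρ v = 0} := fun a =>
      AddMonoidHom.card_fiber_eq_of_mem_range (ρ : ZMod (K * q) →+ ZMod q)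
        (hsurj a) (hsurj 0)
    have hcard := card_eq_sum_card_fiberwise (f := ρ) (s := univ) (t := univ)
      (fun _ _ => mem_univ _)
    rw [sum_congr rfl fun a _ => hconst a, sum_const, card_univ, card_univ, ZMod.card, ZMod.card,
      smul_eq_mul] at hcard
    intro a
    rw [hconst]
    exact Nat.eq_of_mul_eq_mul_left (Nat.pos_of_neZero q) (hcard.symm.trans (mul_comm K q))
  rw [sum_comp, image_univ_of_surjective hsurj, smul_sum]
  exact sum_congr rfl fun a _ => by rw [hfiber]

lemma ZMod.stdAddChar_natCast_mul (x : ZMod (K * q)) :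
    ψ ((K : ZMod (K * q)) * x) = ψ (ρ x) := by
  obtain ⟨k, rfl⟩ := ZMod.intCast_surjective x
  have hK : (K : ℝ) ≠ 0 := Nat.cast_ne_zero.2 (NeZero.ne K)
  rw [map_intCast, ← Int.cast_natCast, ← Int.cast_mul, ← e_intCast_div, ← e_intCast_div]
  congr 1
  push_cast
  field_simp

lemma sum_comp_castHom_mul_stdAddChar_eq_zero (G : ZMod q → ℂ) {t : ZMod (K * q)}
    (ht : (q : ZMod (K * q)) * t ≠ 0) :
    ∑ v : ZMod (K * q), G (ρ v) * ψ (v * t) = 0 := by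
  set S := ∑ v : ZMod (K * q), G (ρ v) * ψ (v * t)
  -- translating `v` by `q` leaves `ρ v` fixed and multiplies the sum by `ψ (q t) ≠ 1`
  have hshift : S = S * ψ ((q : ZMod (K * q)) * t) := calc
    S = ∑ v : ZMod (K * q), G (ρ (v + q)) * ψ ((v + q : ZMod (K * q)) * t) :=
      (Equiv.sum_comp (Equiv.addRight (q : ZMod (K * q)))
        fun v => G (ρ v) * ψ (v * t)).symm
    _ = S * ψ ((q : ZMod (K * q)) * t) := by
      rw [sum_mul]
      refine sum_congr rfl fun v _ => ?_
      rw [map_add, map_natCast, ZMod.natCast_self, add_zero, add_mul, AddChar.map_add_eq_mul,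
        mul_assoc]
  have hne : ψ ((q : ZMod (K * q)) * t) ≠ 1 := by
    rwa [← AddChar.map_zero_eq_one (ZMod.stdAddChar (N := K * q)),
      ZMod.injective_stdAddChar.ne_iff]
  by_contra hS
  exact hne (mul_left_cancel₀ hS (hshift.symm.trans (mul_one S).symm))

lemma sum_char_castHom_mul_stdAddChar_natCast_mul {χ : DirichletCharacter ℂ q}
    (hχ : χ.IsPrimitive) (t : ZMod (K * q)) :
    ∑ v : ZMod (K * q), χ (ρ v) * ψ (v * ((K : ZMod (K * q)) * t))
      = K * (χ⁻¹ (ρ t) * gaussSum χ ψ) := by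
  calc ∑ v : ZMod (K * q), χ (ρ v) * ψ (v * ((K : ZMod (K * q)) * t))
      = ∑ v : ZMod (K * q), (fun a => χ a * ψ (ρ t * a)) (ρ v) :=
        sum_congr rfl fun v _ => by
          rw [mul_left_comm, ZMod.stdAddChar_natCast_mul, map_mul, mul_comm (ρ v)]
    _ = K * gaussSum χ (AddChar.mulShift ψ (ρ t)) := by
        rw [ZMod.sum_comp_castHom (q := q) (K := K) (fun a => χ a * ψ (ρ t * a)),
          nsmul_eq_mul, gaussSum]
        rfl
    _ = K * (χ⁻¹ (ρ t) * gaussSum χ ψ) := by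
        rw [gaussSum_mulShift_of_isPrimitive _ hχ]

lemma sum_eq_sum_range_natCast_mul {M : Type*} [AddCommMonoid M] {f : ZMod (K * q) → M}
    (hf : ∀ w, (q : ZMod (K * q)) * w ≠ 0 → f w = 0) :
    ∑ w, f w = ∑ j ∈ range q, f (K * j) := by
  have hinj : Set.InjOn (fun j : ℕ => (K * j : ZMod (K * q))) (range q) := by
    intro j hj j' hj' h
    have hlt : ∀ i ∈ range q, K * i < K * q := fun i hi =>
      Nat.mul_lt_mul_of_pos_left (mem_range.1 hi) (Nat.pos_of_neZero K)
    have h' : ((K * j : ℕ) : ZMod (K * q)) = ((K * j' : ℕ) : ZMod (K * q)) := by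
      push_cast; exact h
    have := congrArg ZMod.val h'
    rw [ZMod.val_cast_of_lt (hlt j hj), ZMod.val_cast_of_lt (hlt j' hj')] at this
    exact Nat.eq_of_mul_eq_mul_left (Nat.pos_of_neZero K) this
  rw [← sum_image hinj]
  refine (sum_subset (subset_univ _) fun w _ hw => hf w fun hw0 => hw ?_).symm
  have hdvd : K ∣ w.val := by
    rw [← ZMod.natCast_zmod_val w, ← Nat.cast_mul, ZMod.natCast_eq_zero_iff] at hw0
    exact Nat.dvd_of_mul_dvd_mul_left (Nat.pos_of_neZero q) (by rwa [mul_comm q K])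
  obtain ⟨j, hj⟩ := hdvd
  refine mem_image.2 ⟨j, mem_range.2 ?_, ?_⟩
  · have := w.val_lt
    rw [hj] at this
    exact Nat.lt_of_mul_lt_mul_left this
  · rw [← ZMod.natCast_zmod_val w, hj, Nat.cast_mul]

theorem sum_sum_char_castHom_mul_stdAddChar {χ : DirichletCharacter ℂ q} (hχ : χ.IsPrimitive)
    {h h' : ZMod (K * q)} (hh : h * h' = 1) (m n : ZMod (K * q)) :
    ∑ u : ZMod (K * q), ∑ v : ZMod (K * q),
        χ (ρ u) * χ (ρ v) * ψ (h * u * v + m * u + n * v)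
      = χ (ρ h') * gaussSum χ ψ * K * ∑ j ∈ range q,
          ψ (m * (-n + (K * j : ZMod (K * q))) * h') * χ⁻¹ j *
            χ (ρ (-n + (K * j : ZMod (K * q)))) := by
  set S : ZMod (K * q) → ℂ := fun t => ∑ v : ZMod (K * q), χ (ρ v) * ψ (v * t)
  have hinner : ∀ u : ZMod (K * q), ∑ v : ZMod (K * q),
      χ (ρ u) * χ (ρ v) * ψ (h * u * v + m * u + n * v)
        = χ (ρ u) * ψ (m * u) * S (h * u + n) := fun u => by
    rw [mul_sum]
    refine sum_congr rfl fun v _ => ?_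
    rw [show h * u * v + m * u + n * v = m * u + v * (h * u + n) by ring, AddChar.map_add_eq_mul]
    ring
  have hbij : Function.Bijective fun w : ZMod (K * q) => h' * (w - n) :=
    Function.bijective_iff_has_inverse.2 ⟨fun u => h * u + n,
      fun w => by linear_combination (w - n) * hh, fun u => by linear_combination u * hh⟩
  calc ∑ u : ZMod (K * q), ∑ v : ZMod (K * q),
        χ (ρ u) * χ (ρ v) * ψ (h * u * v + m * u + n * v)
      = ∑ w : ZMod (K * q),
          χ (ρ (h' * (w - n))) * ψ (m * (h' * (w - n))) * S w := by
        rw [sum_congr rfl fun u _ => hinner u]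
        refine (Fintype.sum_bijective _ hbij _ _ fun w => ?_).symm
        rw [show h * (h' * (w - n)) + n = w by linear_combination (w - n) * hh]
    _ = ∑ j ∈ range q, χ (ρ (h' * ((K * j : ZMod (K * q)) - n))) *
          ψ (m * (h' * ((K * j : ZMod (K * q)) - n))) * S ((K * j : ZMod (K * q))) :=
        sum_eq_sum_range_natCast_mul fun w hw => by
          rw [show S w = 0 from sum_comp_castHom_mul_stdAddChar_eq_zero _ hw, mul_zero]
    _ = _ := by
        rw [mul_sum]
        refine sum_congr rfl fun j _ => ?_
        rw [show S (K * j : ZMod (K * q)) = _ from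
            sum_char_castHom_mul_stdAddChar_natCast_mul hχ _, map_natCast,
          show h' * ((K * j : ZMod (K * q)) - n) = h' * (-n + (K * j : ZMod (K * q))) by ring,
          map_mul, map_mul]
        ring_nf

end CastHom

theorem sum_Icc_sum_Icc_char_mul_e {q K : ℕ} [NeZero q] [NeZero K]
    {χ : DirichletCharacter ℂ q} (hχ : χ.IsPrimitive) {H Hbar : ℤ}
    (hH : ((K * q : ℕ) : ℤ) ∣ H * Hbar - 1) (m n : ℕ) :
    ∑ u ∈ Icc 1 (K * q), ∑ v ∈ Icc 1 (K * q), χ (u : ZMod q) * χ (v : ZMod q) *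
        e ((u * v : ℕ) * (H : ℝ) / (K * q)) * e (m * (u / (K * q)) + n * (v / (K * q)))
      = χ (Hbar : ZMod q) * gaussTau q χ * K *
          ∑ j ∈ range q, e (((m * (-n + K * j) * Hbar : ℤ) : ℝ) / (K * q)) *
            starRingEnd ℂ (χ j) * χ ((-n + K * j : ℤ) : ZMod q) := by
  set ρ := ZMod.castHom (dvd_mul_left q K) (ZMod q)
  have he : ∀ k : ℤ, e ((k : ℝ) / (K * q)) = ZMod.stdAddChar (k : ZMod (K * q)) := fun k => by
    rw [← e_intCast_div]; push_cast; rfl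
  have hHHbar : (H : ZMod (K * q)) * Hbar = 1 := by
    have := (ZMod.intCast_zmod_eq_zero_iff_dvd _ (K * q)).2 hH
    push_cast at this
    exact sub_eq_zero.1 this
  calc _ = ∑ x : ZMod (K * q), ∑ y : ZMod (K * q),
          χ (ρ x) * χ (ρ y) * ZMod.stdAddChar
            ((H : ZMod (K * q)) * x * y + (m : ZMod (K * q)) * x + (n : ZMod (K * q)) * y) := by
        rw [← ZMod.sum_Icc_natCast]
        refine sum_congr rfl fun u _ => ?_
        rw [← ZMod.sum_Icc_natCast]
        refine sum_congr rfl fun v _ => ?_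
        rw [mul_assoc, ← e_add, show (u * v : ℕ) * (H : ℝ) / (K * q) + (m * (u / (K * q)) +
          n * (v / (K * q))) = ((u * v * H + m * u + n * v : ℤ) : ℝ) / (K * q) by push_cast; ring,
          he, map_natCast ρ, map_natCast ρ]
        push_cast
        ring_nf
    _ = _ := by
        rw [sum_sum_char_castHom_mul_stdAddChar hχ hHHbar, map_intCast, gaussTau_eq_gaussSum]
        congr 1
        refine sum_congr rfl fun j _ => ?_
        rw [he, starRingEnd_apply, MulChar.star_apply', map_add ρ, map_neg ρ, map_mul ρ,
          map_natCast ρ, map_natCast ρ, map_natCast ρ]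
        push_cast
        rfl

lemma summable_norm_pnat_cpow_neg {s : ℂ} (hs : 1 < s.re) :
    Summable fun n : ℕ+ => ‖((n : ℕ) : ℂ) ^ (-s)‖ := by
  simp_rw [Complex.norm_natCast_cpow_of_pos (PNat.pos _), neg_re]
  exact ((Real.summable_nat_rpow (p := -s.re)).2 (by linarith)).comp_injective PNat.coe_injective

lemma summable_cpow_mul_cpow_mul {σ τ : ℂ} (hσ : 1 < σ.re) (hτ : 1 < τ.re)
    {φ : ℕ+ × ℕ+ → ℂ} (hφ : ∀ p, ‖φ p‖ ≤ 1) :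
    Summable fun p : ℕ+ × ℕ+ => ((p.1 : ℕ) : ℂ) ^ (-σ) * ((p.2 : ℕ) : ℂ) ^ (-τ) * φ p :=
  .of_norm_bounded ((summable_norm_pnat_cpow_neg hσ).mul_norm (summable_norm_pnat_cpow_neg hτ))
    fun p => by rw [norm_mul]; exact mul_le_of_le_one_right (norm_nonneg _) (hφ p)

lemma sum_tsum_cpow_mul_cpow_mul {ι : Type*} (s : Finset ι) {σ τ : ℂ} (hσ : 1 < σ.re)
    (hτ : 1 < τ.re) {φ : ι → ℕ+ × ℕ+ → ℂ} (hφ : ∀ i p, ‖φ i p‖ ≤ 1) :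
    ∑ i ∈ s, ∑' p : ℕ+ × ℕ+, ((p.1 : ℕ) : ℂ) ^ (-σ) * ((p.2 : ℕ) : ℂ) ^ (-τ) * φ i p
      = ∑' p : ℕ+ × ℕ+, ((p.1 : ℕ) : ℂ) ^ (-σ) * ((p.2 : ℕ) : ℂ) ^ (-τ) * ∑ i ∈ s, φ i p := by
  simp_rw [mul_sum]
  exact (Summable.tsum_finsetSum fun i _ => summable_cpow_mul_cpow_mul hσ hτ (hφ i)).symm

lemma mul_Fser_mul_Fser {σ τ : ℂ} (hσ : 1 < σ.re) (hτ : 1 < τ.re) (c : ℂ) (x y : ℝ) :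
    c * Fser σ x * Fser τ y = ∑' p : ℕ+ × ℕ+,
      ((p.1 : ℕ) : ℂ) ^ (-σ) * ((p.2 : ℕ) : ℂ) ^ (-τ) * (c * e (p.1 * x + p.2 * y)) := by
  have hnorm : ∀ {s : ℂ} (z : ℝ), 1 < s.re →
      Summable fun n : ℕ+ => ‖e (n * z) * ((n : ℕ) : ℂ) ^ (-s)‖ := fun z hs => by
    simpa only [norm_mul, norm_e, one_mul] using summable_norm_pnat_cpow_neg hs
  rw [mul_assoc, Fser, Fser, tsum_mul_tsum_of_summable_norm (hnorm x hσ) (hnorm y hτ),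
    ← tsum_mul_left]
  exact tsum_congr fun p => by rw [e_add]; ring

theorem A1_opened_general (q : ℕ) (hq : 1 ≤ q) (χ : DirichletCharacter ℂ q) (hχ : χ.IsPrimitive)
    (K : ℕ) (hK : 1 ≤ K) (H : ℤ)
    (Hbar : ℤ) (hHbar : ((K * q : ℕ) : ℤ) ∣ H * Hbar - 1)
    (α s : ℂ) (hs : 1 + max 0 α.re < s.re) :
    ∑ u ∈ Finset.Icc 1 (K * q), ∑ v ∈ Finset.Icc 1 (K * q),
      χ (u : ZMod q) * χ (v : ZMod q) * e ((u * v : ℕ) * (H : ℝ) / (K * q)) *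
        Fser (s - α) ((u : ℝ) / (K * q)) * Fser s ((v : ℝ) / (K * q)) =
      χ ((Hbar : ℤ) : ZMod q) * gaussTau q χ * (K : ℂ) *
        ∑ j ∈ Finset.range q, ∑' m : ℕ+, ∑' n : ℕ+,
          ((m : ℕ) : ℂ) ^ (-(s - α)) * ((n : ℕ) : ℂ) ^ (-s) *
            e ((((m : ℤ) * (-(n : ℤ) + (K : ℤ) * (j : ℤ)) * Hbar : ℤ) : ℝ) / (K * q)) *
            (starRingEnd ℂ) (χ (j : ZMod q)) * χ (((-(n : ℤ) + (K : ℤ) * (j : ℤ)) : ℤ) : ZMod q) := by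
  have : NeZero q := ⟨by omega⟩
  have : NeZero K := ⟨by omega⟩
  have hσ : 1 < (s - α).re := by rw [sub_re]; linarith [le_max_right 0 α.re]
  have hτ : 1 < s.re := by linarith [le_max_left 0 α.re]
  have hχχ (a b : ZMod q) : ‖χ a‖ * ‖χ b‖ ≤ 1 :=
    mul_le_one₀ (χ.norm_le_one a) (norm_nonneg _) (χ.norm_le_one b)
  have hlhs (a b : ZMod q) (x y : ℝ) : ‖χ a * χ b * e x * e y‖ ≤ 1 := by
    simpa only [norm_mul, norm_e, mul_one] using hχχ a b
  have hrhs (x : ℝ) (a b : ZMod q) : ‖e x * starRingEnd ℂ (χ a) * χ b‖ ≤ 1 := by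
    simpa only [norm_mul, norm_e, one_mul, Complex.norm_conj] using hχχ a b
  calc _ = ∑ uv ∈ Icc 1 (K * q) ×ˢ Icc 1 (K * q), ∑' p : ℕ+ × ℕ+,
          ((p.1 : ℕ) : ℂ) ^ (-(s - α)) * ((p.2 : ℕ) : ℂ) ^ (-s) *
            (χ (uv.1 : ZMod q) * χ (uv.2 : ZMod q) * e ((uv.1 * uv.2 : ℕ) * (H : ℝ) / (K * q)) *
              e (p.1 * (uv.1 / (K * q)) + p.2 * (uv.2 / (K * q)))) := by
        rw [sum_product]
        exact sum_congr rfl fun u _ => sum_congr rfl fun v _ => mul_Fser_mul_Fser hσ hτ _ _ _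
    _ = _ := by
        rw [sum_tsum_cpow_mul_cpow_mul _ hσ hτ fun _ _ => hlhs _ _ _ _]
        simp only [sum_product, sum_Icc_sum_Icc_char_mul_e hχ hHbar,
          mul_left_comm _ (_ * (K : ℂ)), tsum_mul_left]
        rw [← sum_tsum_cpow_mul_cpow_mul _ hσ hτ fun _ _ => hrhs _ _ _]
        refine congrArg _ (sum_congr rfl fun j _ => ?_)
        rw [Summable.tsum_prod (summable_cpow_mul_cpow_mul hσ hτ fun _ => hrhs _ _ _)]
        simp only [mul_assoc]

/-- **The opened-up form of `A₁`**:
`A₁(s,α,0,H/(Kq),χ) = χ(H̄) τ(χ) K ∑_{j=0}^{q-1} ∑_{m,n ≥ 1} m^{-(s-α)} n^{-s}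
  e(m(-n+Kj)H̄/(Kq)) χ̄(j) χ(-n+Kj)`. -/
theorem A1_opened (q : ℕ) (hq : 1 ≤ q) (χ : DirichletCharacter ℂ q) (hχ : χ.IsPrimitive)
    (K : ℕ) (hK : 1 ≤ K) (H : ℤ)
    (hqK : Nat.Coprime q K) (hHq : Int.gcd H q = 1) (hHK : Int.gcd H K = 1)
    (Hbar : ℤ) (hHbar : ((K * q : ℕ) : ℤ) ∣ H * Hbar - 1) (hHbar0 : 0 < Hbar)
    (hHbar1 : Hbar ≤ ((K * q : ℕ) : ℤ))
    (α s : ℂ) (hs : 1 + max 0 α.re < s.re) :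
    ∑ u ∈ Finset.Icc 1 (K * q), ∑ v ∈ Finset.Icc 1 (K * q),
      χ (u : ZMod q) * χ (v : ZMod q) * e ((u * v : ℕ) * (H : ℝ) / (K * q)) *
        Fser (s - α) ((u : ℝ) / (K * q)) * Fser s ((v : ℝ) / (K * q)) =
      χ ((Hbar : ℤ) : ZMod q) * gaussTau q χ * (K : ℂ) *
        ∑ j ∈ Finset.range q, ∑' m : ℕ+, ∑' n : ℕ+,
          ((m : ℕ) : ℂ) ^ (-(s - α)) * ((n : ℕ) : ℂ) ^ (-s) *
            e ((((m : ℤ) * (-(n : ℤ) + (K : ℤ) * (j : ℤ)) * Hbar : ℤ) : ℝ) / (K * q)) *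
            (starRingEnd ℂ) (χ (j : ZMod q)) * χ (((-(n : ℤ) + (K : ℤ) * (j : ℤ)) : ℤ) : ZMod q) :=
  A1_opened_general q hq χ hχ K hK H Hbar hHbar α s hs
end
end

section
/- Let Ω ≥ 1 be a real number and define c₁₁ : ℕ → ℤ by c₁₁(m) = [m = 1] − Σ_{d | m, d ≤ Ω} μ(d), where [m=1] is 1 if m = 1 and 0 otherwise. Then c₁₁(m) = 0 for every positive integer m ≤ Ω, and for every integer n > Ω one has the identity μ(n) = Σ_{u₁u₂u₃ = n} μ(u₃) c₁₁(u₁) c₁₁(u₂) − Σ_{u₁u₂u₃ = n, u₁ ≤ Ω, u₂ ≤ Ω} μ(u₁) μ(u₂), where both sums run over ordered triples (u₁,u₂,u₃) of positive integers with u₁u₂u₃ = n. -/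
open Finset

noncomputable section

/-- `c₁₁(m) = [m = 1] - ∑_{d ∣ m, d ≤ Ω} μ(d)`. -/
def c11 (Ω : ℝ) (m : ℕ) : ℤ :=
  (if m = 1 then 1 else 0) -
    ∑ d ∈ m.divisors.filter (fun d : ℕ => (d : ℝ) ≤ Ω), ArithmeticFunction.moebius d

/-- **Vaughan-type decomposition of the Möbius function**: `c₁₁(m) = 0` for `m ≤ Ω`, and for
`n > Ω`, `μ(n) = ∑_{u₁u₂u₃=n} μ(u₃) c₁₁(u₁) c₁₁(u₂) - ∑_{u₁u₂u₃=n, u₁≤Ω, u₂≤Ω} μ(u₁)μ(u₂)`. -/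
theorem vaughan_moebius (Ω : ℝ) (hΩ : 1 ≤ Ω) :
    (∀ m : ℕ, 1 ≤ m → (m : ℝ) ≤ Ω → c11 Ω m = 0) ∧
    (∀ n : ℕ, Ω < (n : ℝ) →
      (ArithmeticFunction.moebius n : ℤ) =
        (∑ p ∈ n.divisorsAntidiagonal, ∑ t ∈ p.2.divisorsAntidiagonal,
          (ArithmeticFunction.moebius t.2 : ℤ) * c11 Ω p.1 * c11 Ω t.1) -
        ∑ p ∈ n.divisorsAntidiagonal, ∑ t ∈ p.2.divisorsAntidiagonal,
          if (p.1 : ℝ) ≤ Ω ∧ (t.1 : ℝ) ≤ Ω then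
            (ArithmeticFunction.moebius p.1 : ℤ) * ArithmeticFunction.moebius t.1
          else 0) := by
  classical
  set Mu : ArithmeticFunction ℤ := ArithmeticFunction.moebius with hMu
  set Z : ArithmeticFunction ℤ := ↑(ArithmeticFunction.zeta) with hZdef
  set M : ArithmeticFunction ℤ :=
    ⟨fun n => if (n : ℝ) ≤ Ω then Mu n else 0, by simp⟩ with hMdef
  have hMapp : ∀ m : ℕ, M m = if (m : ℝ) ≤ Ω then Mu m else 0 := fun m => rfl
  have hZapp : ∀ m : ℕ, m ≠ 0 → Z m = 1 := by
    intro m hm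
    simp [hZdef, ArithmeticFunction.zeta_apply, hm]
  -- (M * Z) m = filtered moebius sum
  have hMZ : ∀ m : ℕ, (M * Z) m =
      ∑ d ∈ m.divisors.filter (fun d : ℕ => (d : ℝ) ≤ Ω), Mu d := by
    intro m
    rw [ArithmeticFunction.coe_mul_zeta_apply, sum_filter]
    exact Finset.sum_congr rfl fun d hd => (hMapp d)
  have subApp : ∀ (f g : ArithmeticFunction ℤ) (k : ℕ), (f - g) k = f k - g k :=
    fun f g k => rfl
  have hC : ∀ m : ℕ, (1 - M * Z) m = c11 Ω m := by
    intro m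
    rw [subApp, hMZ, ArithmeticFunction.one_apply, c11]
  -- Part 1
  have part1 : ∀ m : ℕ, 1 ≤ m → (m : ℝ) ≤ Ω → c11 Ω m = 0 := by
    intro m h1 h2
    have hm0 : m ≠ 0 := by omega
    have hfilt : m.divisors.filter (fun d : ℕ => (d : ℝ) ≤ Ω) = m.divisors := by
      apply Finset.filter_true_of_mem
      intro d hd
      have hdm : d ≤ m := Nat.le_of_dvd (by omega) (Nat.dvd_of_mem_divisors hd)
      exact le_trans (by exact_mod_cast hdm) h2
    have := congrArg (fun f : ArithmeticFunction ℤ => f m)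
      ArithmeticFunction.moebius_mul_coe_zeta
    simp only [ArithmeticFunction.coe_mul_zeta_apply, ArithmeticFunction.one_apply] at this
    rw [c11, hfilt, this]
    ring
  refine ⟨part1, ?_⟩
  intro n hn
  have hn0 : n ≠ 0 := by
    rintro rfl; simp at hn; linarith
  have hzm : Z * Mu = 1 := ArithmeticFunction.coe_zeta_mul_moebius
  have key : (1 - M * Z) * ((1 - M * Z) * Mu) - M * (M * Z) = Mu - M - M := by
    linear_combination (M * M * Z - 2 * M) * hzm
  have keyn := congrArg (fun f : ArithmeticFunction ℤ => f n) key
  simp only [subApp] at keyn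
  have hMn : M n = 0 := by
    rw [hMapp, if_neg (by push_neg; exact hn)]
  -- rewrite the two convolution evaluations
  have hS1 : ((1 - M * Z) * ((1 - M * Z) * Mu)) n =
      ∑ p ∈ n.divisorsAntidiagonal, ∑ t ∈ p.2.divisorsAntidiagonal,
        (Mu t.2 : ℤ) * c11 Ω p.1 * c11 Ω t.1 := by
    rw [ArithmeticFunction.mul_apply]
    refine Finset.sum_congr rfl fun p hp => ?_
    rw [ArithmeticFunction.mul_apply, Finset.mul_sum]
    refine Finset.sum_congr rfl fun t ht => ?_
    rw [hC, hC]; ring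
  have hS2 : (M * (M * Z)) n =
      ∑ p ∈ n.divisorsAntidiagonal, ∑ t ∈ p.2.divisorsAntidiagonal,
        (if (p.1 : ℝ) ≤ Ω ∧ (t.1 : ℝ) ≤ Ω then (Mu p.1 : ℤ) * Mu t.1 else 0) := by
    rw [ArithmeticFunction.mul_apply]
    refine Finset.sum_congr rfl fun p hp => ?_
    rw [ArithmeticFunction.mul_apply, Finset.mul_sum]
    refine Finset.sum_congr rfl fun t ht => ?_
    have hpm := Nat.mem_divisorsAntidiagonal.mp hp
    have hp2 : p.2 ≠ 0 := fun h => hn0 (by rw [← hpm.1, h, mul_zero])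
    have ht2 : t.2 ≠ 0 := by
      have := (Nat.mem_divisorsAntidiagonal.mp ht)
      rintro h
      exact hp2 (by rw [← this.1, h, mul_zero])
    rw [hZapp t.2 ht2, hMapp, hMapp]
    by_cases h1 : (p.1 : ℝ) ≤ Ω <;> by_cases h2 : (t.1 : ℝ) ≤ Ω
    · rw [if_pos h1, if_pos h2, if_pos ⟨h1, h2⟩]; ring
    · rw [if_pos h1, if_neg h2, if_neg (fun h => h2 h.2)]; ring
    · rw [if_neg h1, if_pos h2, if_neg (fun h => h1 h.1)]; ring
    · rw [if_neg h1, if_neg h2, if_neg (fun h => h1 h.1)]; ring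
  rw [hS1, hS2, hMn] at keyn
  linarith [keyn]
end
end

section
/- Let 𝓕₂, 𝓕₃ : ℕ → ℂ be arbitrary arithmetic functions and let * denote Dirichlet convolution. Then for every positive integer u: μ(u)·(𝓕₂ * 𝓕₃)(u) = Σ_{d : d² | u} μ(d) Σ_{u₁u₂ = u/d², gcd(u₁,d) = 1, gcd(u₂,d) = 1} μ(u₁) μ(u₂) 𝓕₂(d u₁) 𝓕₃(d u₂), where the inner sum runs over ordered pairs (u₁,u₂) of positive integers with u₁u₂ = u/d² and both u₁ and u₂ coprime to d. -/
open Finset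

noncomputable section

open ArithmeticFunction in
private lemma sum_mu_divisors (n : ℕ) :
    ∑ d ∈ n.divisors, (moebius d : ℤ) = if n = 1 then 1 else 0 := by
  rw [← coe_mul_zeta_apply, moebius_mul_coe_zeta, one_apply]

open ArithmeticFunction in
private lemma moebius_core (a b : ℕ) (ha : a ≠ 0) (hb : b ≠ 0) :
    ∑ d ∈ (Nat.gcd a b).divisors.filter
        (fun d => Nat.Coprime (a / d) d ∧ Nat.Coprime (b / d) d),
      (moebius d : ℤ) * moebius (a / d) * moebius (b / d) = moebius (a * b) := by
  by_cases hsa : Squarefree a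
  · by_cases hsb : Squarefree b
    · have hg : Nat.gcd a b ≠ 0 := Nat.gcd_ne_zero_left ha
      have hfil : (Nat.gcd a b).divisors.filter
          (fun d => Nat.Coprime (a / d) d ∧ Nat.Coprime (b / d) d)
            = (Nat.gcd a b).divisors := by
        apply Finset.filter_true_of_mem
        intro d hd
        have hda : d ∣ a := (Nat.mem_divisors.mp hd).1.trans (Nat.gcd_dvd_left a b)
        have hdb : d ∣ b := (Nat.mem_divisors.mp hd).1.trans (Nat.gcd_dvd_right a b)
        have h1 : Squarefree (a / d * d) := by rwa [Nat.div_mul_cancel hda]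
        have h2 : Squarefree (b / d * d) := by rwa [Nat.div_mul_cancel hdb]
        exact ⟨Nat.coprime_of_squarefree_mul h1, Nat.coprime_of_squarefree_mul h2⟩
      rw [hfil]
      have hterm : ∀ d ∈ (Nat.gcd a b).divisors,
          (moebius d : ℤ) * moebius (a / d) * moebius (b / d)
            = moebius a * moebius b * moebius d := by
        intro d hd
        have hda : d ∣ a := (Nat.mem_divisors.mp hd).1.trans (Nat.gcd_dvd_left a b)
        have hdb : d ∣ b := (Nat.mem_divisors.mp hd).1.trans (Nat.gcd_dvd_right a b)
        have hsd : Squarefree d := hsa.squarefree_of_dvd hda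
        have h1 : Squarefree (a / d * d) := by rwa [Nat.div_mul_cancel hda]
        have h2 : Squarefree (b / d * d) := by rwa [Nat.div_mul_cancel hdb]
        have hca : Nat.Coprime (a / d) d := Nat.coprime_of_squarefree_mul h1
        have hcb : Nat.Coprime (b / d) d := Nat.coprime_of_squarefree_mul h2
        have hma : (moebius (a / d) : ℤ) * moebius d = moebius a := by
          rw [← isMultiplicative_moebius.map_mul_of_coprime hca, Nat.div_mul_cancel hda]
        have hmb : (moebius (b / d) : ℤ) * moebius d = moebius b := by
          rw [← isMultiplicative_moebius.map_mul_of_coprime hcb, Nat.div_mul_cancel hdb]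
        have hsq : (moebius d : ℤ) ^ 2 = 1 := moebius_sq_eq_one_of_squarefree hsd
        have : (moebius a : ℤ) * moebius b * moebius d
            = (moebius (a/d) * moebius d) * (moebius (b/d) * moebius d) * moebius d := by
          rw [hma, hmb]
        rw [this]
        linear_combination (-((moebius (a/d) : ℤ) * (moebius (b/d) : ℤ) * (moebius d : ℤ))) * hsq
      rw [Finset.sum_congr rfl hterm, ← Finset.mul_sum, sum_mu_divisors]
      by_cases hco : Nat.gcd a b = 1
      · rw [if_pos hco, mul_one, isMultiplicative_moebius.map_mul_of_coprime hco]
      · rw [if_neg hco, mul_zero]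
        have : ¬ Squarefree (a * b) := by
          intro h
          exact hco (Nat.coprime_of_squarefree_mul h)
        rw [moebius_eq_zero_of_not_squarefree this]
    · rw [moebius_eq_zero_of_not_squarefree (fun h => hsb (h.squarefree_of_dvd ⟨a, mul_comm a b⟩))]
      apply Finset.sum_eq_zero
      intro d hd
      simp only [Finset.mem_filter, Nat.mem_divisors] at hd
      have hdb : d ∣ b := hd.1.1.trans (Nat.gcd_dvd_right a b)
      by_cases h1 : moebius d = 0
      · rw [h1]; push_cast; ring
      by_cases h2 : moebius (b / d) = 0
      · rw [h2]; push_cast; ring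
      exfalso
      apply hsb
      rw [← Nat.div_mul_cancel hdb]
      exact Nat.squarefree_mul_iff.mpr ⟨hd.2.2, moebius_ne_zero_iff_squarefree.mp h2,
        moebius_ne_zero_iff_squarefree.mp h1⟩
  · rw [moebius_eq_zero_of_not_squarefree (fun h => hsa (h.squarefree_of_dvd ⟨b, rfl⟩))]
    apply Finset.sum_eq_zero
    intro d hd
    simp only [Finset.mem_filter, Nat.mem_divisors] at hd
    have hda : d ∣ a := hd.1.1.trans (Nat.gcd_dvd_left a b)
    by_cases h1 : moebius d = 0
    · rw [h1]; push_cast; ring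
    by_cases h2 : moebius (a / d) = 0
    · rw [h2]; push_cast; ring
    exfalso
    apply hsa
    rw [← Nat.div_mul_cancel hda]
    exact Nat.squarefree_mul_iff.mpr ⟨hd.2.1, moebius_ne_zero_iff_squarefree.mp h2,
      moebius_ne_zero_iff_squarefree.mp h1⟩

/-- **Möbius times a Dirichlet convolution, opened up**: for every `u ≥ 1`,
`μ(u)(𝓕₂*𝓕₃)(u) = ∑_{d²∣u} μ(d) ∑_{u₁u₂=u/d², (u₁,d)=(u₂,d)=1} μ(u₁)μ(u₂) 𝓕₂(du₁)𝓕₃(du₂)`. -/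
theorem moebius_mul_convolution (F2 F3 : ℕ → ℂ) (u : ℕ) (hu : 0 < u) :
    (ArithmeticFunction.moebius u : ℂ) *
        ∑ p ∈ u.divisorsAntidiagonal, F2 p.1 * F3 p.2 =
      ∑ d ∈ u.divisors.filter (fun d : ℕ => d ^ 2 ∣ u), (ArithmeticFunction.moebius d : ℂ) *
        ∑ p ∈ ((u / d ^ 2 : ℕ).divisorsAntidiagonal.filter
            (fun p : ℕ × ℕ => Nat.Coprime p.1 d ∧ Nat.Coprime p.2 d)),
          (ArithmeticFunction.moebius p.1 : ℂ) * (ArithmeticFunction.moebius p.2 : ℂ) *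
            F2 (d * p.1) * F3 (d * p.2) := by
  classical
  have hu0 : u ≠ 0 := hu.ne'
  -- Step 1: expand μ u inside the left sum using the core identity
  rw [Finset.mul_sum]
  have hL : ∀ p ∈ u.divisorsAntidiagonal,
      (ArithmeticFunction.moebius u : ℂ) * (F2 p.1 * F3 p.2)
        = ∑ d ∈ (Nat.gcd p.1 p.2).divisors.filter
            (fun d => Nat.Coprime (p.1 / d) d ∧ Nat.Coprime (p.2 / d) d),
          ((ArithmeticFunction.moebius d : ℂ) * (ArithmeticFunction.moebius (p.1 / d) : ℂ)
            * (ArithmeticFunction.moebius (p.2 / d) : ℂ)) * (F2 p.1 * F3 p.2) := by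
    intro p hp
    obtain ⟨hpu, -⟩ := Nat.mem_divisorsAntidiagonal.mp hp
    have h1 : p.1 ≠ 0 := fun h => hu0 (by rw [← hpu, h, zero_mul])
    have h2 : p.2 ≠ 0 := fun h => hu0 (by rw [← hpu, h, mul_zero])
    rw [← Finset.sum_mul]
    congr 1
    rw [← hpu, ← moebius_core p.1 p.2 h1 h2]
    push_cast
    rfl
  rw [Finset.sum_congr rfl hL]
  -- Step 2: rewrite RHS with mul_sum
  simp only [Finset.mul_sum]
  -- Step 3: reindex via sigma types
  rw [Finset.sum_sigma', Finset.sum_sigma']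
  refine Finset.sum_nbij' (fun x => ⟨x.2, (x.1.1 / x.2, x.1.2 / x.2)⟩)
    (fun y => ⟨(y.1 * y.2.1, y.1 * y.2.2), y.1⟩) ?_ ?_ ?_ ?_ ?_
  · rintro ⟨⟨a, b⟩, d⟩ hx
    simp only [Finset.mem_sigma, Nat.mem_divisorsAntidiagonal, Finset.mem_filter,
      Nat.mem_divisors] at hx ⊢
    obtain ⟨⟨hab, -⟩, ⟨hdg, -⟩, hca, hcb⟩ := hx
    have hda : d ∣ a := hdg.trans (Nat.gcd_dvd_left a b)
    have hdb : d ∣ b := hdg.trans (Nat.gcd_dvd_right a b)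
    have hd2 : d ^ 2 ∣ u := by
      rw [← hab, sq]
      exact mul_dvd_mul hda hdb
    have hdu : d ∣ u := (dvd_pow_self d two_ne_zero).trans hd2
    have hdne : d ≠ 0 := fun h => hu0 (by simpa [h] using hdu)
    have hd0 : (0:ℕ) < d ^ 2 := pow_pos (Nat.pos_of_ne_zero hdne) 2
    have hquot : a / d * (b / d) = u / d ^ 2 := by
      rw [← hab, sq, Nat.div_mul_div_comm hda hdb]
    exact ⟨⟨⟨hdu, hu0⟩, hd2⟩, ⟨hquot, (Nat.div_pos (Nat.le_of_dvd hu hd2) hd0).ne'⟩, hca, hcb⟩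
  · rintro ⟨d, a, b⟩ hy
    simp only [Finset.mem_sigma, Finset.mem_filter, Nat.mem_divisors,
      Nat.mem_divisorsAntidiagonal] at hy ⊢
    obtain ⟨⟨⟨-, -⟩, hd2⟩, ⟨hab, hq⟩, hca, hcb⟩ := hy
    have hd : d ≠ 0 := fun h => hq (by simp [h])
    have habu : d * a * (d * b) = u := by
      have : d * a * (d * b) = d ^ 2 * (a * b) := by ring
      rw [this, hab, Nat.mul_div_cancel' hd2]
    refine ⟨⟨habu, hu0⟩, ⟨dvd_gcd ⟨a, rfl⟩ ⟨b, rfl⟩, ?_⟩, ?_, ?_⟩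
    · intro h
      rw [Nat.gcd_eq_zero_iff] at h
      exact hu0 (by rw [← habu, h.1, zero_mul])
    · rwa [Nat.mul_div_cancel_left a (Nat.pos_of_ne_zero hd)]
    · rwa [Nat.mul_div_cancel_left b (Nat.pos_of_ne_zero hd)]
  · rintro ⟨⟨a, b⟩, d⟩ hx
    simp only [Finset.mem_sigma, Nat.mem_divisorsAntidiagonal, Finset.mem_filter,
      Nat.mem_divisors] at hx
    obtain ⟨⟨hab, -⟩, ⟨hdg, -⟩, -, -⟩ := hx
    have hda : d ∣ a := hdg.trans (Nat.gcd_dvd_left a b)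
    have hdb : d ∣ b := hdg.trans (Nat.gcd_dvd_right a b)
    simp [Nat.mul_div_cancel' hda, Nat.mul_div_cancel' hdb]
  · rintro ⟨d, a, b⟩ hy
    simp only [Finset.mem_sigma, Finset.mem_filter, Nat.mem_divisors,
      Nat.mem_divisorsAntidiagonal] at hy
    obtain ⟨⟨⟨-, -⟩, hd2⟩, ⟨hab, hq⟩, -, -⟩ := hy
    have hd : d ≠ 0 := fun h => hq (by simp [h])
    simp [Nat.mul_div_cancel_left _ (Nat.pos_of_ne_zero hd)]
  · rintro ⟨⟨a, b⟩, d⟩ hx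
    simp only [Finset.mem_sigma, Nat.mem_divisorsAntidiagonal, Finset.mem_filter,
      Nat.mem_divisors] at hx
    obtain ⟨⟨hab, -⟩, ⟨hdg, -⟩, -, -⟩ := hx
    have hda : d ∣ a := hdg.trans (Nat.gcd_dvd_left a b)
    have hdb : d ∣ b := hdg.trans (Nat.gcd_dvd_right a b)
    simp only []
    rw [Nat.mul_div_cancel' hda, Nat.mul_div_cancel' hdb]
    ring
end
end

section
/- Let y ≥ 1 be real, q ≥ 1 an integer, χ₀ the principal Dirichlet character modulo q, α, β ∈ ℂ, and let a : ℕ → ℂ be any function with a(n) = 0 for n > y. For j ≥ 1 set E(α,j) = Σ_{h ≤ y/j} a(hj) χ₀(h) h^{−1−α}, and F(j,s) = Π_{p | j} (1 − p^{−s}). Then Σ_{h,k ≤ y} a(h)a(k) χ₀(hk) (h,k)^{1+α+β} h^{−1−α} k^{−1−β} = Σ_{j ≤ y} j^{−1} F(j, 1+α+β) χ₀(j) E(α,j) E(β,j). -/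
/-!
Since `n ↦ n ^ s F(n, s)` is multiplicative and telescopes on prime powers,
`(h, k) ^ s = ∑_{j ∣ (h, k)} j ^ s F(j, s)`. Inserting this with `s = 1 + α + β` and summing
over `j` first, with `h = h' j` and `k = k' j` (`h', k' ≤ ⌊y⌋ / j = ⌊y / j⌋`), each summand
factors as the right-hand side requires because `χ₀(j) ^ 2 = χ₀(j)` and
`j ^ (1 + α + β) j ^ (-1 - α) j ^ (-1 - β) = j⁻¹`.
-/

open Complex Finset

noncomputable section

/-- `F(j,s) = ∏_{p ∣ j} (1 - p^{-s})`. -/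
def Ffin (j : ℕ) (s : ℂ) : ℂ := ∏ p ∈ j.primeFactors, (1 - (p : ℂ) ^ (-s))

/-- `E(α,j) = ∑_{h ≤ y/j} a(hj) χ₀(h) h^{-1-α}`. -/
def Ecoef (q : ℕ) (a : ℕ → ℂ) (y : ℝ) (α : ℂ) (j : ℕ) : ℂ :=
  ∑ h ∈ Finset.Icc 1 ⌊y / (j : ℝ)⌋₊,
    a (h * j) * (1 : DirichletCharacter ℂ q) (h : ZMod q) * (h : ℂ) ^ (-1 - α)

namespace ArithmeticFunction

/-- `n ↦ n ^ s`; the value at `0` is set by hand since `(0 : ℂ) ^ 0 = 1`. -/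
def natCpow (s : ℂ) : ArithmeticFunction ℂ :=
  ⟨fun n => if n = 0 then 0 else (n : ℂ) ^ s, if_pos rfl⟩

theorem natCpow_apply (s : ℂ) {n : ℕ} (hn : n ≠ 0) : natCpow s n = (n : ℂ) ^ s :=
  if_neg hn

theorem isMultiplicative_natCpow (s : ℂ) : (natCpow s).IsMultiplicative := by
  refine IsMultiplicative.iff_ne_zero.mpr ⟨by simp [natCpow_apply], fun {m n} hm hn _ => ?_⟩
  rw [natCpow_apply s (mul_ne_zero hm hn), natCpow_apply s hm, natCpow_apply s hn,
    Nat.cast_mul, natCast_mul_natCast_cpow]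

theorem natCpow_pmul_prodPrimeFactors_mul_zeta (s : ℂ) :
    (natCpow s).pmul (prodPrimeFactors fun p => 1 - (p : ℂ) ^ (-s)) *
      (zeta : ArithmeticFunction ℂ) = natCpow s := by
  have hf := (isMultiplicative_natCpow s).pmul (IsMultiplicative.prodPrimeFactors
    fun p => 1 - (p : ℂ) ^ (-s))
  refine (IsMultiplicative.eq_iff_eq_on_prime_powers _ (hf.mul isMultiplicative_zeta.natCast) _
    (isMultiplicative_natCpow s)).mpr fun p i hp => ?_
  rw [coe_mul_zeta_apply, Nat.sum_divisors_prime_pow hp]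
  induction i with
  | zero => simp [natCpow_apply]
  | succ i ih =>
    rw [sum_range_succ, ih, pmul_apply, prodPrimeFactors_apply (pow_ne_zero _ hp.ne_zero),
      Nat.primeFactors_prime_pow i.succ_ne_zero hp, prod_singleton,
      natCpow_apply s (pow_ne_zero _ hp.ne_zero), natCpow_apply s (pow_ne_zero _ hp.ne_zero),
      pow_succ, Nat.cast_mul, natCast_mul_natCast_cpow, cpow_neg]
    have hps : (p : ℂ) ^ s ≠ 0 :=
      fun h => Nat.cast_ne_zero.mpr hp.ne_zero ((cpow_eq_zero_iff _ _).mp h).1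
    field_simp
    ring

end ArithmeticFunction

open ArithmeticFunction in
theorem sum_divisors_cpow_mul_Ffin (s : ℂ) {n : ℕ} (hn : n ≠ 0) :
    ∑ j ∈ n.divisors, (j : ℂ) ^ s * Ffin j s = (n : ℂ) ^ s := by
  rw [← natCpow_apply s hn, ← natCpow_pmul_prodPrimeFactors_mul_zeta s, coe_mul_zeta_apply]
  refine sum_congr rfl fun j hj => ?_
  have hj0 := Nat.ne_of_gt (Nat.pos_of_mem_divisors hj)
  rw [pmul_apply, natCpow_apply s hj0, prodPrimeFactors_apply hj0, Ffin]

theorem sum_Icc_filter_dvd {M : Type*} [AddCommMonoid M] (g : ℕ → M) (N : ℕ) {j : ℕ}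
    (hj : 0 < j) : ∑ h ∈ Icc 1 N with j ∣ h, g h = ∑ h ∈ Icc 1 (N / j), g (h * j) := by
  refine (sum_nbij' (· * j) (· / j) ?_ ?_ ?_ ?_ fun _ _ => rfl).symm
  · intro h hh
    rw [mem_Icc, Nat.le_div_iff_mul_le hj] at hh
    exact mem_filter.mpr ⟨mem_Icc.mpr ⟨Nat.mul_pos hh.1 hj, hh.2⟩, dvd_mul_left j h⟩
  · intro h hh
    obtain ⟨hh, c, rfl⟩ := mem_filter.mp hh
    rw [mem_Icc] at hh
    rw [mem_Icc, Nat.mul_div_cancel_left c hj, Nat.le_div_iff_mul_le hj, mul_comm]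
    exact ⟨Nat.pos_of_mul_pos_left hh.1, hh.2⟩
  · intro h _
    simp [Nat.mul_div_cancel _ hj]
  · intro h hh
    exact Nat.div_mul_cancel (mem_filter.mp hh).2

theorem sum_sum_sum_divisors_gcd {M : Type*} [AddCommMonoid M] (f : ℕ → ℕ → ℕ → M) (N : ℕ) :
    ∑ h ∈ Icc 1 N, ∑ k ∈ Icc 1 N, ∑ j ∈ (h.gcd k).divisors, f j h k =
      ∑ j ∈ Icc 1 N, ∑ h ∈ Icc 1 (N / j), ∑ k ∈ Icc 1 (N / j), f j (h * j) (k * j) := by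
  have hdiv : ∀ h ∈ Icc 1 N, ∀ k, (h.gcd k).divisors = {j ∈ Icc 1 N | j ∣ h ∧ j ∣ k} := by
    intro h hh k
    rw [mem_Icc] at hh
    ext j
    simp only [Nat.mem_divisors, Nat.dvd_gcd_iff, mem_filter, mem_Icc]
    constructor
    · rintro ⟨⟨hjh, hjk⟩, -⟩
      exact ⟨⟨Nat.pos_of_dvd_of_pos hjh hh.1, (Nat.le_of_dvd hh.1 hjh).trans hh.2⟩, hjh, hjk⟩
    · rintro ⟨-, hjh, hjk⟩
      exact ⟨⟨hjh, hjk⟩, Nat.gcd_ne_zero_left (by omega)⟩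
  calc ∑ h ∈ Icc 1 N, ∑ k ∈ Icc 1 N, ∑ j ∈ (h.gcd k).divisors, f j h k
      = ∑ j ∈ Icc 1 N, ∑ h ∈ Icc 1 N with j ∣ h, ∑ k ∈ Icc 1 N with j ∣ k, f j h k := by
        rw [sum_congr rfl fun h hh => sum_congr rfl fun k _ => by rw [hdiv h hh k, sum_filter]]
        simp only [sum_filter, ite_and, ite_sum_zero]
        exact (sum_congr rfl fun h _ => sum_comm).trans sum_comm
    _ = _ := by
        refine sum_congr rfl fun j hj => ?_
        have hj : 0 < j := (mem_Icc.mp hj).1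
        rw [sum_Icc_filter_dvd _ N hj]
        exact sum_congr rfl fun h _ => sum_Icc_filter_dvd _ N hj

theorem DirichletCharacter.isIdempotentElem_one_apply {R : Type*} [CommMonoidWithZero R]
    {q : ℕ} (x : ZMod q) : IsIdempotentElem ((1 : DirichletCharacter R q) x) := by
  by_cases hx : IsUnit x
  · rw [IsIdempotentElem, MulChar.one_apply hx, mul_one]
  · rw [IsIdempotentElem, MulChar.map_nonunit _ hx, mul_zero]

theorem natCast_cpow_mul_cpow_mul_cpow {j : ℕ} (hj : j ≠ 0) (α β : ℂ) :
    (j : ℂ) ^ (1 + α + β) * (j : ℂ) ^ (-1 - α) * (j : ℂ) ^ (-1 - β) = (j : ℂ)⁻¹ := by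
  have hj0 : (j : ℂ) ≠ 0 := Nat.cast_ne_zero.mpr hj
  rw [← cpow_add _ _ hj0, ← cpow_add _ _ hj0, ← cpow_neg_one]
  ring_nf

theorem sigma_decomposition_summand {q : ℕ} (α β : ℂ) (a : ℕ → ℂ) {j : ℕ} (hj : j ≠ 0)
    (h k : ℕ) :
    a (h * j) * a (k * j) * (1 : DirichletCharacter ℂ q) ((h * j * (k * j) : ℕ) : ZMod q) *
        ((j : ℂ) ^ (1 + α + β) * Ffin j (1 + α + β)) *
        ((h * j : ℕ) : ℂ) ^ (-1 - α) * ((k * j : ℕ) : ℂ) ^ (-1 - β) =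
      (j : ℂ)⁻¹ * Ffin j (1 + α + β) * (1 : DirichletCharacter ℂ q) (j : ZMod q) *
        (a (h * j) * (1 : DirichletCharacter ℂ q) (h : ZMod q) * (h : ℂ) ^ (-1 - α)) *
        (a (k * j) * (1 : DirichletCharacter ℂ q) (k : ZMod q) * (k : ℂ) ^ (-1 - β)) := by
  rw [← natCast_cpow_mul_cpow_mul_cpow hj α β,
    ← (DirichletCharacter.isIdempotentElem_one_apply (j : ZMod q)).eq]
  push_cast
  rw [map_mul, map_mul, map_mul, natCast_mul_natCast_cpow, natCast_mul_natCast_cpow]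
  ring

theorem sigma_decomposition_general (y : ℝ) (q : ℕ) (α β : ℂ) (a : ℕ → ℂ) :
    ∑ h ∈ Finset.Icc 1 ⌊y⌋₊, ∑ k ∈ Finset.Icc 1 ⌊y⌋₊,
      a h * a k * (1 : DirichletCharacter ℂ q) ((h * k : ℕ) : ZMod q) *
        (Nat.gcd h k : ℂ) ^ ((1 : ℂ) + α + β) * (h : ℂ) ^ (-1 - α) * (k : ℂ) ^ (-1 - β) =
    ∑ j ∈ Finset.Icc 1 ⌊y⌋₊,
      (j : ℂ)⁻¹ * Ffin j (1 + α + β) * (1 : DirichletCharacter ℂ q) (j : ZMod q) *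
        Ecoef q a y α j * Ecoef q a y β j := by
  set χ₀ := (1 : DirichletCharacter ℂ q)
  set N := ⌊y⌋₊
  calc _ = ∑ h ∈ Icc 1 N, ∑ k ∈ Icc 1 N, ∑ j ∈ (h.gcd k).divisors,
        a h * a k * χ₀ ((h * k : ℕ) : ZMod q) * ((j : ℂ) ^ (1 + α + β) * Ffin j (1 + α + β)) *
          (h : ℂ) ^ (-1 - α) * (k : ℂ) ^ (-1 - β) :=
        sum_congr rfl fun h hh => sum_congr rfl fun k _ => by
          rw [← sum_divisors_cpow_mul_Ffin _
              (Nat.gcd_ne_zero_left (Nat.one_le_iff_ne_zero.mp (mem_Icc.mp hh).1)),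
            mul_sum, sum_mul, sum_mul]
    _ = _ := sum_sum_sum_divisors_gcd _ N
    _ = _ := sum_congr rfl fun j hj => by
        simp only [Ecoef, Nat.floor_div_natCast, mul_sum, sum_mul]
        have hj0 : j ≠ 0 := Nat.one_le_iff_ne_zero.mp (mem_Icc.mp hj).1
        exact (sum_congr rfl fun h _ => sum_congr rfl fun k _ =>
          sigma_decomposition_summand α β a hj0 h k).trans sum_comm

/-- **The gcd decomposition of `Σ(α,β)`**:
`∑_{h,k ≤ y} a(h)a(k) χ₀(hk) (h,k)^{1+α+β} h^{-1-α} k^{-1-β}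
  = ∑_{j ≤ y} j^{-1} F(j,1+α+β) χ₀(j) E(α,j) E(β,j)`. -/
theorem sigma_decomposition (y : ℝ) (hy : 1 ≤ y) (q : ℕ) (hq : 1 ≤ q) (α β : ℂ)
    (a : ℕ → ℂ) (ha : ∀ n : ℕ, y < (n : ℝ) → a n = 0) :
    ∑ h ∈ Finset.Icc 1 ⌊y⌋₊, ∑ k ∈ Finset.Icc 1 ⌊y⌋₊,
      a h * a k * (1 : DirichletCharacter ℂ q) ((h * k : ℕ) : ZMod q) *
        (Nat.gcd h k : ℂ) ^ ((1 : ℂ) + α + β) * (h : ℂ) ^ (-1 - α) * (k : ℂ) ^ (-1 - β) =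
    ∑ j ∈ Finset.Icc 1 ⌊y⌋₊,
      (j : ℂ)⁻¹ * Ffin j (1 + α + β) * (1 : DirichletCharacter ℂ q) (j : ZMod q) *
        Ecoef q a y α j * Ecoef q a y β j :=
  sigma_decomposition_general y q α β a
end
end

section
/- Let δ, δ' ≥ 0 with δ + δ' ≤ c < 1 for a fixed constant c, let q ≥ 1 be an integer, and let F₁(n,s) = Π_{p | n}(1 + p^{−s}). Then for any positive integer r and all y ≥ 2: if δ = 0, Σ_{n ≤ y, gcd(n,q) = 1} μ²(n) n^{−(1−δ)} F₁(n, 1−δ')^r = O_{c,r}(log y); and if δ > 0, this sum is O_{c,r}(y^δ/δ). The implied constants depend only on c and r. -/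
open Finset

noncomputable section

/-- `F₁(n,s) = ∏_{p ∣ n} (1 + p^{-s})`. -/
def F1prod (n : ℕ) (s : ℝ) : ℝ := ∏ p ∈ n.primeFactors, (1 + (p : ℝ) ^ (-s))

/-!
For squarefree `n`, expanding the Euler product and using the chord bound
`(1 + x)^r ≤ 1 + (2^r - 1) x` on `[0, 1]` gives `F₁(n, 1-δ')^r ≤ ∑_{d ∣ n} 2^{r ω(d)} d^{δ'-1}`.
Hence the summand is at most the Dirichlet convolution of `h(d) = 2^{r ω(d)} d^{δ+δ'-2}` with
`m ↦ m^{δ-1}`, and the sum over `n ≤ y` is at most `(∑_{d ≤ y} h(d)) (∑_{m ≤ y} m^{δ-1})`.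
Since `2^{r ω(d)} ≪_ε d^ε` and `δ + δ' - 2 ≤ c - 2 < -1`, the first factor is bounded in terms of
`c` and `r` alone, while comparison with `∫_1^y x^{δ-1} dx` bounds the second one by `1 + log y`
if `δ = 0` and by `y^δ / δ` if `δ > 0`.
-/

open ArithmeticFunction

theorem one_add_pow_le_one_add_two_pow_sub_one_mul {x : ℝ} (hx₀ : 0 ≤ x) (hx₁ : x ≤ 1) (r : ℕ) :
    (1 + x) ^ r ≤ 1 + (2 ^ r - 1) * x := by
  induction r with
  | zero => simp
  | succ r ih =>
    have h2r : (1 : ℝ) ≤ 2 ^ r := one_le_pow₀ one_le_two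
    calc (1 + x) ^ (r + 1) = (1 + x) ^ r * (1 + x) := pow_succ _ _
      _ ≤ (1 + (2 ^ r - 1) * x) * (1 + x) := by gcongr
      _ ≤ 1 + (2 ^ (r + 1) - 1) * x := by
        rw [pow_succ]
        nlinarith [mul_nonneg (sub_nonneg.2 h2r) (mul_nonneg hx₀ (sub_nonneg.2 hx₁))]

theorem F1prod_pos (n : ℕ) (s : ℝ) : 0 < F1prod n s :=
  prod_pos fun _ _ => by positivity

theorem F1prod_pow_le_sum_divisors {s : ℝ} (hs : 0 ≤ s) {n : ℕ} (hn : Squarefree n) (r : ℕ) :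
    F1prod n s ^ r ≤ ∑ d ∈ n.divisors, (2 ^ r : ℝ) ^ #d.primeFactors * (d : ℝ) ^ (-s) := by
  set g : ArithmeticFunction ℝ := prodPrimeFactors fun p => 2 ^ r * (p : ℝ) ^ (-s)
  have hg_prime : ∀ p ∈ n.primeFactors, g p = 2 ^ r * (p : ℝ) ^ (-s) := fun p hp => by
    have hp := Nat.prime_of_mem_primeFactors hp
    rw [prodPrimeFactors_apply hp.ne_zero, hp.primeFactors, prod_singleton]
  have hg_divisor : ∀ d ∈ n.divisors, g d = (2 ^ r : ℝ) ^ #d.primeFactors * (d : ℝ) ^ (-s) :=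
    fun d hd => by
      have hd : Squarefree d := hn.squarefree_of_dvd (Nat.dvd_of_mem_divisors hd)
      rw [prodPrimeFactors_apply hd.ne_zero, prod_mul_distrib, prod_const,
        Real.finsetProd_rpow _ _ fun p _ => Nat.cast_nonneg p, ← Nat.cast_prod,
        Nat.prod_primeFactors_of_squarefree hd]
  calc F1prod n s ^ r = ∏ p ∈ n.primeFactors, (1 + (p : ℝ) ^ (-s)) ^ r := (prod_pow _ _ _).symm
    _ ≤ ∏ p ∈ n.primeFactors, (1 + g p) := by
        refine prod_le_prod (fun p _ => by positivity) fun p hp => ?_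
        have hp1 : (1 : ℝ) ≤ p := by exact_mod_cast (Nat.prime_of_mem_primeFactors hp).one_le
        have hx₀ : 0 ≤ (p : ℝ) ^ (-s) := by positivity
        have hx₁ : (p : ℝ) ^ (-s) ≤ 1 := Real.rpow_le_one_of_one_le_of_nonpos hp1 (by linarith)
        rw [hg_prime p hp]
        linarith [one_add_pow_le_one_add_two_pow_sub_one_mul hx₀ hx₁ r]
    _ = ∑ d ∈ n.divisors, g d :=
        (IsMultiplicative.prodPrimeFactors _).prodPrimeFactors_one_add_of_squarefree hn
    _ = _ := sum_congr rfl hg_divisor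

theorem moebius_sq_mul_rpow_mul_F1prod_pow_le_sum_divisorsAntidiagonal {s : ℝ} (hs : 0 ≤ s)
    (a : ℝ) (r n : ℕ) :
    (moebius n : ℝ) ^ 2 * (n : ℝ) ^ a * F1prod n s ^ r ≤
      ∑ x ∈ n.divisorsAntidiagonal,
        (2 ^ r : ℝ) ^ #x.1.primeFactors * (x.1 : ℝ) ^ (a - s) * (x.2 : ℝ) ^ a := by
  by_cases hn : Squarefree n
  swap
  · rw [moebius_eq_zero_of_not_squarefree hn, Int.cast_zero, zero_pow two_ne_zero, zero_mul,
      zero_mul]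
    positivity
  have hμ : (moebius n : ℝ) ^ 2 = 1 := by
    rw [moebius_apply_of_squarefree hn]
    push_cast
    rw [← pow_mul, mul_comm, pow_mul, neg_one_sq, one_pow]
  set h : ℕ → ℝ := fun d => (2 ^ r : ℝ) ^ #d.primeFactors * (d : ℝ) ^ (-s)
  calc _ ≤ (n : ℝ) ^ a * ∑ d ∈ n.divisors, h d := by
        rw [hμ, one_mul]
        gcongr
        exact F1prod_pow_le_sum_divisors hs hn r
    _ = ∑ x ∈ n.divisorsAntidiagonal, h x.1 * n ^ a := by
        rw [Nat.sum_divisorsAntidiagonal (fun d _ => h d * n ^ a), mul_sum]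
        exact sum_congr rfl fun d _ => mul_comm _ _
    _ = _ := sum_congr rfl fun x hx => by
        obtain ⟨rfl, hn0⟩ := Nat.mem_divisorsAntidiagonal.1 hx
        have hx₁ : (0 : ℝ) < x.1 := by
          exact_mod_cast Nat.pos_of_ne_zero (left_ne_zero_of_mul hn0)
        rw [Nat.cast_mul, Real.mul_rpow hx₁.le (Nat.cast_nonneg _), sub_eq_add_neg a,
          Real.rpow_add hx₁]
        ring

theorem exists_pow_card_primeFactors_le_mul_rpow {K : ℝ} (hK : 1 ≤ K) {ε : ℝ} (hε : 0 < ε) :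
    ∃ A : ℝ, 0 < A ∧ ∀ d : ℕ, d ≠ 0 → K ^ #d.primeFactors ≤ A * (d : ℝ) ^ ε := by
  -- Each prime `p ≥ P` satisfies `K ≤ p ^ ε`; the fewer than `P` smaller ones cost `K` each.
  set P := ⌈K ^ ε⁻¹⌉₊
  refine ⟨K ^ P, by positivity, fun d hd => ?_⟩
  have hfactor : ∀ p ∈ d.primeFactors, K ≤ (if p < P then K else 1) * (p : ℝ) ^ ε := by
    intro p hp
    have hp1 : (1 : ℝ) ≤ p := by exact_mod_cast (Nat.prime_of_mem_primeFactors hp).one_le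
    split_ifs with hpP
    · exact le_mul_of_one_le_right (by linarith) (Real.one_le_rpow hp1 hε.le)
    · calc K = (K ^ ε⁻¹) ^ ε := by
            rw [← Real.rpow_mul (by linarith), inv_mul_cancel₀ hε.ne', Real.rpow_one]
        _ ≤ (p : ℝ) ^ ε := by
            gcongr
            exact (Nat.le_ceil _).trans (by exact_mod_cast not_lt.1 hpP)
        _ = 1 * (p : ℝ) ^ ε := (one_mul _).symm
  calc K ^ #d.primeFactors = ∏ p ∈ d.primeFactors, K := (prod_const K).symm
    _ ≤ ∏ p ∈ d.primeFactors, (if p < P then K else 1) * (p : ℝ) ^ ε :=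
        prod_le_prod (fun _ _ => by positivity) hfactor
    _ = K ^ #{p ∈ d.primeFactors | p < P} * (∏ p ∈ d.primeFactors, (p : ℝ)) ^ ε := by
        rw [prod_mul_distrib, ← prod_filter, prod_const,
          Real.finsetProd_rpow _ _ fun p _ => Nat.cast_nonneg p]
    _ ≤ K ^ P * (d : ℝ) ^ ε := by
        gcongr
        · exact (card_le_card fun p hp => mem_range.2 (mem_filter.1 hp).2).trans
            (card_range P).le
        · rw [← Nat.cast_prod]
          exact_mod_cast Nat.le_of_dvd (Nat.pos_of_ne_zero hd) (Nat.prod_primeFactors_dvd d)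

theorem exists_sum_Ioc_pow_card_primeFactors_mul_rpow_le {K : ℝ} (hK : 1 ≤ K) {t : ℝ}
    (ht : t < -1) :
    ∃ C : ℝ, 0 < C ∧ ∀ u ≤ t, ∀ N : ℕ, ∑ d ∈ Ioc 0 N, K ^ #d.primeFactors * (d : ℝ) ^ u ≤ C := by
  obtain ⟨A, hA, hKA⟩ := exists_pow_card_primeFactors_le_mul_rpow hK (ε := (-1 - t) / 2)
    (by linarith)
  have hsum : Summable fun d : ℕ => (d : ℝ) ^ ((t - 1) / 2) :=
    Real.summable_nat_rpow.2 (by linarith)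
  refine ⟨A * ∑' d : ℕ, (d : ℝ) ^ ((t - 1) / 2), ?_, fun u hu N => ?_⟩
  · exact mul_pos hA (hsum.tsum_pos (fun _ => by positivity) 1 (by norm_num))
  calc _ ≤ ∑ d ∈ Ioc 0 N, A * (d : ℝ) ^ ((t - 1) / 2) := sum_le_sum fun d hd => by
        have hd : 1 ≤ d := (mem_Ioc.1 hd).1
        have hd1 : (1 : ℝ) ≤ d := by exact_mod_cast hd
        calc K ^ #d.primeFactors * (d : ℝ) ^ u
            ≤ A * (d : ℝ) ^ ((-1 - t) / 2) * (d : ℝ) ^ u := by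
              gcongr
              exact hKA d (by omega)
          _ = A * (d : ℝ) ^ ((-1 - t) / 2 + u) := by
              rw [mul_assoc, Real.rpow_add (by linarith)]
          _ ≤ _ := by
              gcongr
              linarith
    _ = A * ∑ d ∈ Ioc 0 N, (d : ℝ) ^ ((t - 1) / 2) := (mul_sum _ _ _).symm
    _ ≤ _ := by
        gcongr
        exact hsum.sum_le_tsum _ fun _ _ => by positivity

theorem sum_Ioc_sum_divisorsAntidiagonal_le {M : Type*} [AddCommMonoid M] [PartialOrder M]
    [IsOrderedAddMonoid M] {f : ℕ × ℕ → M} (hf : 0 ≤ f) (N : ℕ) :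
    ∑ n ∈ Ioc 0 N, ∑ x ∈ n.divisorsAntidiagonal, f x ≤ ∑ x ∈ Ioc 0 N ×ˢ Ioc 0 N, f x := by
  calc _ = ∑ n ∈ Ioc 0 N, ∑ x ∈ Ioc 0 N ×ˢ Ioc 0 N, if x.1 * x.2 = n then f x else 0 := by
        refine sum_congr rfl fun n hn => ?_
        rw [mem_Ioc] at hn
        rw [Nat.divisorsAntidiagonal_eq_prod_filter_of_le hn.1.ne' hn.2, sum_filter]
    _ = ∑ x ∈ Ioc 0 N ×ˢ Ioc 0 N, if x.1 * x.2 ∈ Ioc 0 N then f x else 0 := by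
        rw [sum_comm]
        exact sum_congr rfl fun x _ => sum_ite_eq _ _ _
    _ ≤ _ := sum_le_sum fun x _ => by
        split_ifs
        exacts [le_rfl, hf x]

theorem exists_sum_Ioc_moebius_sq_mul_rpow_mul_F1prod_pow_le {t : ℝ} (ht : t < -1) (r : ℕ) :
    ∃ C : ℝ, 0 < C ∧ ∀ a s : ℝ, 0 ≤ s → a - s ≤ t → ∀ N : ℕ,
      ∑ n ∈ Ioc 0 N, (moebius n : ℝ) ^ 2 * (n : ℝ) ^ a * F1prod n s ^ r ≤
        C * ∑ m ∈ Ioc 0 N, (m : ℝ) ^ a := by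
  obtain ⟨C, hC, hsum⟩ := exists_sum_Ioc_pow_card_primeFactors_mul_rpow_le
    (one_le_pow₀ one_le_two : (1 : ℝ) ≤ 2 ^ r) ht
  refine ⟨C, hC, fun a s hs has N => ?_⟩
  set h : ℕ → ℝ := fun d => (2 ^ r : ℝ) ^ #d.primeFactors * (d : ℝ) ^ (a - s)
  calc _ ≤ ∑ n ∈ Ioc 0 N, ∑ x ∈ n.divisorsAntidiagonal, h x.1 * (x.2 : ℝ) ^ a :=
        sum_le_sum fun n _ =>
          moebius_sq_mul_rpow_mul_F1prod_pow_le_sum_divisorsAntidiagonal hs a r n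
    _ ≤ ∑ x ∈ Ioc 0 N ×ˢ Ioc 0 N, h x.1 * (x.2 : ℝ) ^ a :=
        sum_Ioc_sum_divisorsAntidiagonal_le (fun x => by positivity) N
    _ = (∑ d ∈ Ioc 0 N, h d) * ∑ m ∈ Ioc 0 N, (m : ℝ) ^ a := by
        rw [sum_mul_sum, sum_product]
    _ ≤ C * ∑ m ∈ Ioc 0 N, (m : ℝ) ^ a := by
        gcongr
        exact hsum _ has N

theorem sum_Ioc_rpow_le_one_add_integral {s : ℝ} (hs : s ≤ 0) (N : ℕ) :
    ∑ m ∈ Ioc 0 (N + 1), (m : ℝ) ^ s ≤ 1 + ∫ x in (1 : ℝ)..(N + 1), x ^ s := by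
  have hanti : AntitoneOn (fun x : ℝ => x ^ s) (Set.Icc 1 (1 + N)) :=
    (Real.antitoneOn_rpow_Ioi_of_exponent_nonpos hs).mono fun x hx =>
      lt_of_lt_of_le one_pos hx.1
  have htail : ∑ m ∈ Ioc 1 (N + 1), (m : ℝ) ^ s =
      ∑ i ∈ range N, (1 + ((i + 1 : ℕ) : ℝ)) ^ s := by
    rw [range_eq_Ico]
    calc _ = ∑ i ∈ Ico 0 N, ((i + 2 : ℕ) : ℝ) ^ s :=
          (sum_Ico_add' (fun m : ℕ => (m : ℝ) ^ s) 0 N 2).symm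
      _ = _ := sum_congr rfl fun i _ => by push_cast; ring_nf
  rw [← sum_Ioc_consecutive _ zero_le_one (by omega : 1 ≤ N + 1), htail, add_comm (N : ℝ),
    show Ioc 0 1 = {1} from rfl, sum_singleton, Nat.cast_one, Real.one_rpow]
  exact (add_le_add_iff_left 1).2 hanti.sum_le_integral

theorem sum_Ioc_rpow_neg_one_le_one_add_log (N : ℕ) :
    ∑ m ∈ Ioc 0 N, (m : ℝ) ^ (-1 : ℝ) ≤ 1 + Real.log N := by
  obtain _ | N := N
  · simp
  calc _ ≤ 1 + ∫ x in (1 : ℝ)..(N + 1), x ^ (-1 : ℝ) :=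
        sum_Ioc_rpow_le_one_add_integral (by norm_num) N
    _ = 1 + Real.log (N + 1 : ℕ) := by
        simp_rw [Real.rpow_neg_one]
        rw [integral_inv_of_pos one_pos (by positivity), div_one, Nat.cast_succ]

theorem sum_Ioc_rpow_sub_one_le_rpow_div {δ : ℝ} (hδ : 0 < δ) (hδ1 : δ ≤ 1) (N : ℕ) :
    ∑ m ∈ Ioc 0 N, (m : ℝ) ^ (δ - 1) ≤ N ^ δ / δ := by
  obtain _ | N := N
  · simp [Real.zero_rpow hδ.ne']
  calc _ ≤ 1 + ∫ x in (1 : ℝ)..(N + 1), x ^ (δ - 1) :=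
        sum_Ioc_rpow_le_one_add_integral (by linarith) N
    _ = 1 + ((N + 1 : ℕ) ^ δ - 1) / δ := by
        rw [integral_rpow (Or.inl (by linarith))]
        simp
    _ ≤ (N + 1 : ℕ) ^ δ / δ := by
        rw [sub_div, ← sub_nonneg]
        field_simp
        linarith

theorem lemma_five_three_general (c : ℝ) (hc : c < 1) (r : ℕ) :
    ∃ D : ℝ, 0 < D ∧ ∀ δ δ' : ℝ, 0 ≤ δ → 0 ≤ δ' → δ + δ' ≤ c →
      ∀ q : ℕ, 1 ≤ q → ∀ y : ℝ, 2 ≤ y →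
        (δ = 0 →
          ∑ n ∈ (Finset.Icc 1 ⌊y⌋₊).filter (fun n : ℕ => Nat.Coprime n q),
            (ArithmeticFunction.moebius n : ℝ) ^ 2 * (n : ℝ) ^ (-(1 - δ)) *
              (F1prod n (1 - δ')) ^ r ≤ D * Real.log y) ∧
        (0 < δ →
          ∑ n ∈ (Finset.Icc 1 ⌊y⌋₊).filter (fun n : ℕ => Nat.Coprime n q),
            (ArithmeticFunction.moebius n : ℝ) ^ 2 * (n : ℝ) ^ (-(1 - δ)) *
              (F1prod n (1 - δ')) ^ r ≤ D * y ^ δ / δ) := by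
  obtain ⟨C, hC, hbound⟩ :=
    exists_sum_Ioc_moebius_sq_mul_rpow_mul_F1prod_pow_le (t := c - 2) (by linarith) r
  refine ⟨3 * C, by positivity, fun δ δ' hδ hδ' hδδ' q _ y hy => ?_⟩
  have hNy : (⌊y⌋₊ : ℝ) ≤ y := Nat.floor_le (by linarith)
  have hsum : ∑ n ∈ (Icc 1 ⌊y⌋₊).filter (fun n : ℕ => Nat.Coprime n q),
      (moebius n : ℝ) ^ 2 * (n : ℝ) ^ (-(1 - δ)) * F1prod n (1 - δ') ^ r ≤
        C * ∑ m ∈ Ioc 0 ⌊y⌋₊, (m : ℝ) ^ (δ - 1) := by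
    rw [show Icc 1 ⌊y⌋₊ = Ioc 0 ⌊y⌋₊ from rfl, neg_sub]
    refine (sum_le_sum_of_subset_of_nonneg (filter_subset _ _) fun n _ _ => ?_).trans
      (hbound (δ - 1) (1 - δ') (by linarith) (by linarith) ⌊y⌋₊)
    exact mul_nonneg (by positivity) (pow_nonneg (F1prod_pos n _).le r)
  refine ⟨fun hδ0 => hsum.trans ?_, fun hδ0 => hsum.trans ?_⟩
  · have hlog : Real.log ⌊y⌋₊ ≤ Real.log y :=
      Real.log_le_log (by exact_mod_cast Nat.floor_pos.2 (by linarith)) hNy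
    have hlog2 : Real.log 2 ≤ Real.log y := Real.log_le_log two_pos hy
    calc C * ∑ m ∈ Ioc 0 ⌊y⌋₊, (m : ℝ) ^ (δ - 1) ≤ C * (1 + Real.log ⌊y⌋₊) := by
          gcongr
          rw [hδ0, zero_sub]
          exact sum_Ioc_rpow_neg_one_le_one_add_log _
      _ ≤ 3 * C * Real.log y := by nlinarith [Real.log_two_gt_d9]
  · calc C * ∑ m ∈ Ioc 0 ⌊y⌋₊, (m : ℝ) ^ (δ - 1) ≤ C * (y ^ δ / δ) := by
          gcongr
          exact (sum_Ioc_rpow_sub_one_le_rpow_div hδ0 (by linarith) _).trans (by gcongr)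
      _ ≤ 3 * C * y ^ δ / δ := by
          rw [mul_assoc, mul_div_assoc, mul_div_assoc]
          have : 0 ≤ C * (y ^ δ / δ) := by positivity
          linarith

/-- **Lemma 5.3**: for `δ, δ' ≥ 0` with `δ + δ' ≤ c < 1` and any positive integer `r`,
`∑_{n ≤ y, (n,q)=1} μ²(n) n^{-(1-δ)} F₁(n,1-δ')^r` is `O_{c,r}(log y)` if `δ = 0`, and
`O_{c,r}(y^δ/δ)` if `δ > 0`. -/
theorem lemma_five_three (c : ℝ) (hc : c < 1) (r : ℕ) (hr : 0 < r) :
    ∃ D : ℝ, 0 < D ∧ ∀ δ δ' : ℝ, 0 ≤ δ → 0 ≤ δ' → δ + δ' ≤ c →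
      ∀ q : ℕ, 1 ≤ q → ∀ y : ℝ, 2 ≤ y →
        (δ = 0 →
          ∑ n ∈ (Finset.Icc 1 ⌊y⌋₊).filter (fun n : ℕ => Nat.Coprime n q),
            (ArithmeticFunction.moebius n : ℝ) ^ 2 * (n : ℝ) ^ (-(1 - δ)) *
              (F1prod n (1 - δ')) ^ r ≤ D * Real.log y) ∧
        (0 < δ →
          ∑ n ∈ (Finset.Icc 1 ⌊y⌋₊).filter (fun n : ℕ => Nat.Coprime n q),
            (ArithmeticFunction.moebius n : ℝ) ^ 2 * (n : ℝ) ^ (-(1 - δ)) *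
              (F1prod n (1 - δ')) ^ r ≤ D * y ^ δ / δ) :=
  lemma_five_three_general c hc r

end
end
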